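/- arXiv:1010.5454 — 4 statements merged into one kernel-verified Lean document; each statement's English description precedes it below -/
import Mathlib

section
/- A bounded sequence x ∈ l^∞(ℕ₀, X) satisfies σ(x) = ∅ if and only if x ∈ c₀(ℕ₀, X), i.e., lim_{n→∞} x(n) = 0. -/
noncomputable section
open Filter Topology Metric Set

variable (X : Type*) [NormedAddCommGroup X] [NormedSpace ℂ X]

/-- `l^∞(ℕ₀, X)`, bounded `X`-valued sequences with sup norm. -/
abbrev Linf := lp (fun _ : ℕ => X) ⊤

/-- The shift (translation) operator on `l^∞` as a linear map. -/
def shiftl : Linf X →ₗ[ℂ] Linf X where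
  toFun x := ⟨fun n => x (n + 1), memℓp_infty (by
    obtain ⟨C, hC⟩ := (memℓp_infty_iff.1 (lp.memℓp x))
    exact ⟨C, by rintro - ⟨n, rfl⟩; exact hC ⟨n + 1, rfl⟩⟩)⟩
  map_add' x y := by ext n; simp [lp.coeFn_add]; rfl
  map_smul' c x := by ext n; simp [lp.coeFn_smul]

@[simp] lemma shiftl_apply (x : Linf X) (n : ℕ) : (shiftl X x : ∀ _ : ℕ, X) n = x (n + 1) := rfl

/-- The shift operator on `l^∞` as a continuous linear map. -/
def shiftL : Linf X →L[ℂ] Linf X :=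
  (shiftl X).mkContinuous 1 (fun x => by
    rw [one_mul]
    exact lp.norm_le_of_forall_le (norm_nonneg x) fun n =>
      lp.norm_apply_le_norm ENNReal.top_ne_zero x (n + 1))

/-- `c₀(ℕ₀, X)`, the subspace of sequences tending to `0`. -/
def c0 : Submodule ℂ (Linf X) where
  carrier := {x | Tendsto (fun n => x n) atTop (nhds 0)}
  zero_mem' := by simpa [lp.coeFn_zero] using tendsto_const_nhds
  add_mem' := by
    intro a b ha hb
    have := ha.add hb
    simp only [lp.coeFn_add, Pi.add_apply, add_zero] at this ⊢
    exact this
  smul_mem' := by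
    intro c a ha
    have : Tendsto (fun n => c • (a : ∀ _ : ℕ, X) n) atTop (nhds (c • (0:X))) := ha.const_smul c
    simpa [lp.coeFn_smul] using this

instance c0_isClosed : IsClosed ((c0 X : Set (Linf X))) := by
  refine IsSeqClosed.isClosed ?_
  intro f x hf hfx
  show Tendsto (fun n => (x : ∀ _ : ℕ, X) n) atTop (nhds 0)
  rw [Metric.tendsto_atTop] at hfx ⊢
  intro ε hε
  obtain ⟨K, hK⟩ := hfx (ε / 2) (by positivity)
  have h2 : Tendsto (fun n => (f K : ∀ _ : ℕ, X) n) atTop (nhds 0) := hf K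
  rw [Metric.tendsto_atTop] at h2
  obtain ⟨N, hN⟩ := h2 (ε / 2) (by positivity)
  refine ⟨N, fun n hn => ?_⟩
  have h3 : ‖(x : ∀ _ : ℕ, X) n - (f K : ∀ _ : ℕ, X) n‖ ≤ ‖x - f K‖ := by
    have := lp.norm_apply_le_norm ENNReal.top_ne_zero (x - f K) n
    simpa [lp.coeFn_sub] using this
  have h4 : ‖x - f K‖ < ε / 2 := by
    have := hK K le_rfl
    rwa [dist_comm, dist_eq_norm] at this
  have h5 : ‖(f K : ∀ _ : ℕ, X) n‖ < ε / 2 := by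
    have := hN n hn
    rwa [dist_eq_norm, sub_zero] at this
  have : ‖(x : ∀ _ : ℕ, X) n‖ ≤ ‖(x : ∀ _ : ℕ, X) n - (f K : ∀ _ : ℕ, X) n‖ + ‖(f K : ∀ _ : ℕ, X) n‖ := by
    simpa using norm_add_le ((x : ∀ _ : ℕ, X) n - (f K : ∀ _ : ℕ, X) n) ((f K : ∀ _ : ℕ, X) n)
  rw [dist_eq_norm, sub_zero]
  calc ‖(x : ∀ _ : ℕ, X) n‖ ≤ _ + _ := this
    _ < ε / 2 + ε / 2 := add_lt_add (lt_of_le_of_lt h3 h4) h5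
    _ = ε := add_halves ε

/-- The quotient space `Y = l^∞/c₀`. -/
abbrev YQ := Linf X ⧸ c0 X

lemma c0_shift_invariant : c0 X ≤ (c0 X).comap (shiftl X) := by
  intro x hx
  have : Tendsto (fun n => (x : ∀ _ : ℕ, X) (n + 1)) atTop (nhds 0) :=
    hx.comp (tendsto_add_atTop_nat 1)
  exact this

/-- The operator `S̄` induced by the shift on the quotient `Y`, as a linear map. -/
def SbarL : YQ X →ₗ[ℂ] YQ X := (c0 X).mapQ (c0 X) (shiftl X) (c0_shift_invariant X)

/-- `S̄` as a continuous linear map on `Y`. -/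
def Sbar : YQ X →L[ℂ] YQ X :=
  (SbarL X).mkContinuous 1 (by
    intro q
    rw [one_mul]
    refine le_of_forall_pos_le_add ?_
    intro ε hε
    obtain ⟨m, hm, hlt⟩ := Submodule.Quotient.norm_mk_lt q hε
    have h1 : SbarL X q = Submodule.Quotient.mk (shiftl X m) := by
      rw [← hm]; rfl
    calc ‖SbarL X q‖ = ‖(Submodule.Quotient.mk (shiftl X m) : YQ X)‖ := by rw [h1]
      _ ≤ ‖shiftl X m‖ := Submodule.Quotient.norm_mk_le _ _
      _ ≤ ‖m‖ := by
          exact lp.norm_le_of_forall_le (norm_nonneg m) fun n =>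
            lp.norm_apply_le_norm ENNReal.top_ne_zero m (n + 1)
      _ ≤ ‖q‖ + ε := hlt.le)

/-- The spectrum of a bounded sequence `x`: the set of points `z₀` of the unit circle at
which the `Y`-valued resolvent function `λ ↦ R(λ, S̄) x̄` (defined for `|λ| ≠ 1`) has no
holomorphic extension. -/
def specSeq (x : Linf X) : Set ℂ :=
  {z₀ : ℂ | ‖z₀‖ = 1 ∧
    ¬ ∃ (U : Set ℂ) (h : ℂ → YQ X), IsOpen U ∧ z₀ ∈ U ∧ DifferentiableOn ℂ h U ∧
      ∀ z ∈ U, ‖z‖ ≠ 1 → z • h z - SbarL X (h z) = Submodule.Quotient.mk x}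

/-!
Since `S̄` is invertible on `Y` with `‖S̄‖ ≤ 1` and `‖S̄⁻¹‖ ≤ 1` (the inverse is induced by the right
shift), its spectrum lies on the unit circle. If `σ(x) = ∅`, the local holomorphic extensions of the
resolvent `λ ↦ R(λ, S̄) x̄` across the circle all agree with the limit of the resolvent from off the
circle, which is dense; so that limit is an entire function. It tends to `0` at infinity, hence
vanishes by Liouville's theorem, and then `x̄ = (λ - S̄) R(λ, S̄) x̄ = 0`.
-/

theorem limUnder_nhdsWithin_eq_of_eqOn {α β : Type*} [TopologicalSpace α] [TopologicalSpace β]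
    [T2Space β] [Nonempty β] {S U : Set α} (hS : Dense S) (hU : IsOpen U)
    {g h : α → β} (hh : ContinuousOn h U) (hgh : EqOn h g (U ∩ S)) {z : α} (hz : z ∈ U) :
    limUnder (𝓝[S] z) g = h z := by
  have := mem_closure_iff_nhdsWithin_neBot.1 (hS z)
  have hUz : U ∈ 𝓝 z := hU.mem_nhds hz
  refine Tendsto.limUnder_eq
    (((hh.continuousAt hUz).tendsto.mono_left nhdsWithin_le_nhds).congr' ?_)
  filter_upwards [inter_mem_nhdsWithin S hUz] with w hw using hgh ⟨hw.2, hw.1⟩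

theorem ContinuousLinearMap.spectrum_subset_sphere_of_mul_eq_one {𝕜 E : Type*}
    [NontriviallyNormedField 𝕜] [NormedAddCommGroup E] [NormedSpace 𝕜 E] [CompleteSpace E]
    {a b : E →L[𝕜] E} (hab : a * b = 1) (hba : b * a = 1) (ha : ‖a‖ ≤ 1) (hb : ‖b‖ ≤ 1) :
    spectrum 𝕜 a ⊆ sphere 0 1 := by
  intro k hk
  have hone : ‖(1 : E →L[𝕜] E)‖ ≤ 1 := norm_id_le
  let u : (E →L[𝕜] E)ˣ := ⟨a, b, hab, hba⟩
  have hk0 : k ≠ 0 := spectrum.ne_zero_of_mem_of_unit (a := u) hk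
  have hinv := (spectrum.inv_mem_iff (r := Units.mk0 k hk0) (a := u)).1 hk
  rw [Units.val_inv_eq_inv_val, Units.val_mk0] at hinv
  have hle : ‖k‖ ≤ 1 :=
    (spectrum.norm_le_norm_mul_of_mem hk).trans (mul_le_one₀ ha (norm_nonneg _) hone)
  have hle' : ‖k‖⁻¹ ≤ 1 := norm_inv k ▸
    (spectrum.norm_le_norm_mul_of_mem hinv).trans (mul_le_one₀ hb (norm_nonneg _) hone)
  rw [mem_sphere_zero_iff_norm]
  exact le_antisymm hle ((inv_le_one₀ (norm_pos_iff.2 hk0)).1 hle')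

section Resolvent

variable {E : Type*} [NormedAddCommGroup E] [NormedSpace ℂ E]

theorem resolvent_apply_eq_iff {a : E →L[ℂ] E} {z : ℂ} (hz : z ∈ resolventSet ℂ a) {v w : E} :
    resolvent a z w = v ↔ z • v - a v = w := by
  have hsub (u : E) : (algebraMap ℂ (E →L[ℂ] E) z - a) u = z • u - a u := by
    simp [Algebra.algebraMap_eq_smul_one]
  have hunit := spectrum.mem_resolventSet_iff.1 hz
  constructor
  · rintro rfl
    rw [← hsub]
    exact DFunLike.congr_fun (Ring.mul_inverse_cancel _ hunit) w
  · rintro rfl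
    rw [← hsub]
    exact DFunLike.congr_fun (Ring.inverse_mul_cancel _ hunit) v

theorem eq_zero_of_resolvent_apply_extends [CompleteSpace E] (a : E →L[ℂ] E) {K : Set ℂ}
    (hK : spectrum ℂ a ⊆ K) (hKc : Dense Kᶜ) (v : E)
    (hext : ∀ z ∈ K, ∃ (U : Set ℂ) (h : ℂ → E), IsOpen U ∧ z ∈ U ∧ DifferentiableOn ℂ h U ∧
      EqOn h (fun w => resolvent a w v) (U ∩ Kᶜ)) :
    v = 0 := by
  set G : ℂ → E := fun w => resolvent a w v
  have hρ : IsOpen (resolventSet ℂ a) := spectrum.isOpen_resolventSet a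
  have hG : DifferentiableOn ℂ G (resolventSet ℂ a) := fun w hw =>
    ((spectrum.hasDerivAt_resolvent_const_left hw).differentiableAt.clm_apply
      (differentiableAt_const v)).differentiableWithinAt
  have hloc (z : ℂ) : ∃ (U : Set ℂ) (h : ℂ → E), IsOpen U ∧ z ∈ U ∧ DifferentiableOn ℂ h U ∧
      EqOn h G (U ∩ Kᶜ) := by
    by_cases hz : z ∈ K
    · exact hext z hz
    · exact ⟨_, G, hρ, Set.notMem_compl_iff.1 fun h => hz (hK h), hG, fun _ _ => rfl⟩
  set F : ℂ → E := fun z => limUnder (𝓝[Kᶜ] z) G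
  have hFG : EqOn F G (resolventSet ℂ a) := fun z hz =>
    limUnder_nhdsWithin_eq_of_eqOn hKc hρ hG.continuousOn (fun _ _ => rfl) hz
  have hF : Differentiable ℂ F := fun z => by
    obtain ⟨U, h, hU, hzU, hh, hhG⟩ := hloc z
    have hFh : F =ᶠ[𝓝 z] h := eventually_of_mem (hU.mem_nhds hzU) fun w hw =>
      limUnder_nhdsWithin_eq_of_eqOn hKc hU hh.continuousOn hhG hw
    exact hFh.differentiableAt_iff.2 (hh.differentiableAt (hU.mem_nhds hzU))
  have hρ_cobounded : resolventSet ℂ a ∈ Bornology.cobounded ℂ :=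
    compl_compl (resolventSet ℂ a) ▸ spectrum.isBounded a
  have hF0 : Tendsto F (cocompact ℂ) (𝓝 0) := by
    rw [← Metric.cobounded_eq_cocompact]
    have hG0 : Tendsto G (Bornology.cobounded ℂ) (𝓝 0) := by
      simpa [G, Function.comp_def] using
        ((ContinuousLinearMap.apply ℂ E v).continuous.tendsto 0).comp
          (spectrum.resolvent_tendsto_cobounded a)
    exact hG0.congr' (eventuallyEq_of_mem hρ_cobounded fun w hw => (hFG hw).symm)
  obtain ⟨z, hz⟩ := Filter.nonempty_of_mem hρ_cobounded
  have hGz : G z = 0 := (hFG hz).symm.trans (hF.apply_eq_of_tendsto_cocompact z hF0)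
  simpa using ((resolvent_apply_eq_iff hz).1 hGz).symm

end Resolvent

theorem Submodule.norm_mapQ_apply_le {R M N : Type*} [Ring R] [SeminormedAddCommGroup M]
    [SeminormedAddCommGroup N] [Module R M] [Module R N] (p : Submodule R M) (q : Submodule R N)
    (f : M →ₗ[R] N) (hf : p ≤ q.comap f) (hnorm : ∀ m, ‖f m‖ ≤ ‖m‖) (y : M ⧸ p) :
    ‖p.mapQ q f hf y‖ ≤ ‖y‖ := by
  refine le_of_forall_pos_le_add fun ε hε => ?_
  obtain ⟨m, rfl, hm⟩ := Submodule.Quotient.norm_mk_lt y hε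
  calc ‖p.mapQ q f hf (Submodule.Quotient.mk m)‖ = ‖(Submodule.Quotient.mk (f m) : N ⧸ q)‖ := rfl
    _ ≤ ‖m‖ := (Submodule.Quotient.norm_mk_le q (f m)).trans (hnorm m)
    _ ≤ _ := hm.le

def shiftr : Linf X →ₗ[ℂ] Linf X where
  toFun x := ⟨fun n => Nat.casesOn n 0 fun m => x m, memℓp_infty ⟨‖x‖, by
    rintro - ⟨_ | m, rfl⟩
    · simp
    · exact lp.norm_apply_le_norm ENNReal.top_ne_zero x m⟩⟩
  map_add' x y := by
    ext (_ | n)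
    · exact (add_zero 0).symm
    · rfl
  map_smul' c x := by ext (_ | n) <;> simp [lp.coeFn_smul]

@[simp] lemma shiftr_apply_zero (x : Linf X) : (shiftr X x : ∀ _ : ℕ, X) 0 = 0 := rfl

@[simp] lemma shiftr_apply_succ (x : Linf X) (n : ℕ) :
    (shiftr X x : ∀ _ : ℕ, X) (n + 1) = x n := rfl

lemma norm_shiftr_le (x : Linf X) : ‖shiftr X x‖ ≤ ‖x‖ :=
  lp.norm_le_of_forall_le (norm_nonneg x) fun
    | 0 => by simp
    | n + 1 => lp.norm_apply_le_norm ENNReal.top_ne_zero x n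

lemma shiftl_shiftr (x : Linf X) : shiftl X (shiftr X x) = x := rfl

lemma shiftr_shiftl_sub_mem_c0 (x : Linf X) : shiftr X (shiftl X x) - x ∈ c0 X := by
  show Tendsto (fun n => (shiftr X (shiftl X x) - x : Linf X) n) atTop (𝓝 0)
  rw [← tendsto_add_atTop_iff_nat 1]
  simp

lemma c0_le_comap_shiftr : c0 X ≤ (c0 X).comap (shiftr X) := fun x hx =>
  (tendsto_add_atTop_iff_nat 1).1 (show Tendsto (fun n => (x : ∀ _ : ℕ, X) n) atTop (𝓝 0) from hx)

def Tbar : YQ X →L[ℂ] YQ X :=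
  ((c0 X).mapQ (c0 X) (shiftr X) (c0_le_comap_shiftr X)).mkContinuous 1 fun y => by
    rw [one_mul]
    exact Submodule.norm_mapQ_apply_le _ _ _ _ (norm_shiftr_le X) y

lemma Sbar_mul_Tbar : Sbar X * Tbar X = 1 := by
  refine ContinuousLinearMap.ext fun y => ?_
  induction y using Submodule.Quotient.induction_on with
  | H x => exact congrArg Submodule.Quotient.mk (shiftl_shiftr X x)

lemma Tbar_mul_Sbar : Tbar X * Sbar X = 1 := by
  refine ContinuousLinearMap.ext fun y => ?_
  induction y using Submodule.Quotient.induction_on with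
  | H x => exact (Submodule.Quotient.eq _).2 (shiftr_shiftl_sub_mem_c0 X x)

lemma norm_Sbar_le : ‖Sbar X‖ ≤ 1 := LinearMap.mkContinuous_norm_le _ zero_le_one _

lemma norm_Tbar_le : ‖Tbar X‖ ≤ 1 := LinearMap.mkContinuous_norm_le _ zero_le_one _

lemma spectrum_Sbar_subset_sphere [CompleteSpace X] : spectrum ℂ (Sbar X) ⊆ sphere 0 1 :=
  ContinuousLinearMap.spectrum_subset_sphere_of_mul_eq_one (Sbar_mul_Tbar X) (Tbar_mul_Sbar X)
    (norm_Sbar_le X) (norm_Tbar_le X)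

/-- `σ(x) = ∅` iff `x(n) → 0`. -/
theorem stmt6 [CompleteSpace X] (x : Linf X) :
    specSeq X x = ∅ ↔ Tendsto (fun n => (x : ∀ _ : ℕ, X) n) atTop (nhds 0) := by
  change _ ↔ x ∈ c0 X
  rw [← Submodule.Quotient.mk_eq_zero]
  constructor
  · intro hσ
    refine eq_zero_of_resolvent_apply_extends (Sbar X) (spectrum_Sbar_subset_sphere X)
      (interior_eq_empty_iff_dense_compl.1 (interior_sphere' 0 1)) _ fun z hz => ?_
    have hz' : ‖z‖ = 1 := mem_sphere_zero_iff_norm.1 hz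
    have hz_notMem : z ∉ specSeq X x := hσ ▸ notMem_empty z
    obtain ⟨U, h, hU, hzU, hh, hhx⟩ := not_not.1 fun hn => hz_notMem ⟨hz', hn⟩
    refine ⟨U, h, hU, hzU, hh, fun w ⟨hwU, hw⟩ => ?_⟩
    have hw' : ‖w‖ ≠ 1 := fun h1 => hw (mem_sphere_zero_iff_norm.2 h1)
    have hwρ : w ∈ resolventSet ℂ (Sbar X) :=
      Set.notMem_compl_iff.1 fun hσw => hw (spectrum_Sbar_subset_sphere X hσw)
    exact ((resolvent_apply_eq_iff hwρ).2 (hhx w hwU hw')).symm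
  · intro hx
    exact eq_empty_iff_forall_notMem.2 fun z ⟨_, hz⟩ => hz ⟨univ, 0, isOpen_univ, mem_univ z,
      differentiableOn_const 0, fun w _ _ => by simp [hx]⟩
end
end

section
/- If the Z-transform x̃(z) of a bounded sequence x ∈ l^∞(ℕ₀, X) extends holomorphically to a neighborhood of a point z₀ on the unit circle, then z₀ ∉ σ(x). Consequently, σ(x) ⊆ σ_Z(x), where σ_Z(x) is the set of points of Γ to which x̃ has no holomorphic extension. -/
noncomputable section
open Filter Topology Metric Set

variable (X : Type*) [NormedAddCommGroup X] [NormedSpace ℂ X]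

/-- The Z-transform of a bounded sequence: `x̃(z) = ∑_{j≥0} x(j) z^{-j}`. -/
def ztrans (x : Linf X) (z : ℂ) : X := ∑' j : ℕ, (z⁻¹) ^ j • (x : ∀ _ : ℕ, X) j

/-- The Z-spectrum of a bounded sequence: the set of points of the unit circle to which
the Z-transform has no holomorphic extension. -/
def sigmaZ (x : Linf X) : Set ℂ :=
  {z₀ : ℂ | ‖z₀‖ = 1 ∧
    ¬ ∃ (U : Set ℂ) (g : ℂ → X), IsOpen U ∧ z₀ ∈ U ∧ DifferentiableOn ℂ g U ∧
      ∀ z ∈ U, 1 < ‖z‖ → g z = ztrans X x z}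

/-! If `g` extends `x̃` near `z₀`, the functions `Hₙ(z) = zⁿ g(z) - ∑_{j<n} z^{n-j} x(j)` are
holomorphic near `z₀` and satisfy `Hₙ₊₁ = z (Hₙ - x(n))`, so `z ↦ z⁻¹ (Hₙ(z))ₙ` solves
`(z - S̄) h = x̄` as soon as `(Hₙ)ₙ` is uniformly bounded near `z₀`: a uniformly bounded family of
holomorphic functions is holomorphic as an `l^∞`-valued map, by the Cauchy integral formula.
Off the unit circle `|‖z‖ - 1| ‖Hₙ(z)‖` is bounded, by `g` inside and, outside, because `Hₙ` is
the Z-transform of the shifted sequence. Multiplying by a polynomial that vanishes to first order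
where a small circle around `z₀` meets the unit circle makes `Hₙ` uniformly bounded on that
circle, and the maximum principle carries the bound inside. -/

section

variable {X}

theorem ContinuousLinearMap.map_circleIntegral {E F : Type*} [NormedAddCommGroup E]
    [NormedSpace ℂ E] [CompleteSpace E] [NormedAddCommGroup F] [NormedSpace ℂ F]
    [CompleteSpace F] (L : E →L[ℂ] F) {f : ℂ → E} {c : ℂ} {R : ℝ} (hf : CircleIntegrable f c R) :
    L (∮ z in C(c, R), f z) = ∮ z in C(c, R), L (f z) := by
  simp only [circleIntegral, ← L.intervalIntegral_comp_comm hf.out, map_smul]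

section HolomorphicFamily

variable {ι E : Type*} [NormedAddCommGroup E] [NormedSpace ℂ E]

theorem norm_sub_le_of_forall_mem_closedBall_norm_le {f : ℂ → E} {c : ℂ} {R C : ℝ} (hR : 0 < R)
    (hf : DiffContOnCl ℂ f (ball c R)) (hC : ∀ z ∈ closedBall c R, ‖f z‖ ≤ C) {z w : ℂ}
    (hz : z ∈ closedBall c (R / 2)) (hw : w ∈ closedBall c (R / 2)) :
    ‖f z - f w‖ ≤ 2 * C / R * ‖z - w‖ := by
  refine (convex_closedBall c (R / 2)).norm_image_sub_le_of_norm_deriv_le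
    (fun y hy => ?_) (fun y hy => ?_) hw hz
  · exact hf.differentiableAt isOpen_ball (closedBall_subset_ball (by linarith) hy)
  · have hy' : dist y c ≤ R / 2 := hy
    have hball : ball y (R / 2) ⊆ ball c R := ball_subset_ball' (by linarith)
    have hsphere : sphere y (R / 2) ⊆ closedBall c R :=
      sphere_subset_closedBall.trans (closedBall_subset_closedBall' (by linarith))
    calc ‖deriv f y‖ ≤ C / (R / 2) := Complex.norm_deriv_le_of_forall_mem_sphere_norm_le
          (by positivity) (hf.mono hball) fun ζ hζ => hC ζ (hsphere hζ)
      _ = 2 * C / R := by field_simp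

theorem exists_differentiableOn_lp_of_forall_norm_le [CompleteSpace E] {f : ι → ℂ → E} {c : ℂ}
    {R C : ℝ} (hR : 0 < R) (hf : ∀ i, DiffContOnCl ℂ (f i) (ball c R))
    (hC : ∀ i, ∀ z ∈ closedBall c R, ‖f i z‖ ≤ C) :
    ∃ F : ℂ → lp (fun _ : ι => E) ⊤, DifferentiableOn ℂ F (ball c (R / 2)) ∧
      ∀ z ∈ ball c (R / 2), ∀ i, F z i = f i z := by
  classical
  set Φ : ℂ → lp (fun _ : ι => E) ⊤ := fun z =>
    if hz : z ∈ closedBall c R then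
      ⟨fun i => f i z, memℓp_infty ⟨C, by rintro - ⟨i, rfl⟩; exact hC i z hz⟩⟩
    else 0
  have hΦ : ∀ z ∈ closedBall c R, ∀ i, Φ z i = f i z := fun z hz i => by
    simp only [Φ, dif_pos hz]
  have hsub : closedBall c (R / 2) ⊆ closedBall c R := closedBall_subset_closedBall (by linarith)
  have hΦcont : ContinuousOn Φ (closedBall c (R / 2)) := by
    refine (LipschitzOnWith.of_dist_le_mul (K := (2 * C / R).toNNReal)
      fun z hz w hw => ?_).continuousOn
    rw [dist_eq_norm, dist_eq_norm]
    refine lp.norm_le_of_forall_le (by positivity) fun i => ?_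
    rw [lp.coeFn_sub, Pi.sub_apply, hΦ z (hsub hz), hΦ w (hsub hw)]
    exact (norm_sub_le_of_forall_mem_closedBall_norm_le hR (hf i) (hC i) hz hw).trans
      (mul_le_mul_of_nonneg_right (Real.le_coe_toNNReal _) (norm_nonneg _))
  set r : NNReal := ⟨R / 2, by positivity⟩
  have hint : CircleIntegrable Φ c r :=
    (hΦcont.mono sphere_subset_closedBall).circleIntegrable r.2
  refine ⟨fun w => (2 * Real.pi * Complex.I : ℂ)⁻¹ • ∮ z in C(c, r), (z - w)⁻¹ • Φ z, ?_, ?_⟩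
  · have h := (hasFPowerSeriesOn_cauchy_integral hint
      (NNReal.coe_pos.1 (half_pos hR))).differentiableOn
    rwa [Metric.eball_coe] at h
  · intro w hw i
    have hw' : ∀ z ∈ sphere c (R / 2), z - w ≠ 0 := fun z hz =>
      sub_ne_zero.2 fun h => (mem_ball.1 hw).ne (h ▸ mem_sphere.1 hz)
    have hint_w : CircleIntegrable (fun z => (z - w)⁻¹ • Φ z) c r :=
      (((continuousOn_id.sub continuousOn_const).inv₀ hw').smul
        (hΦcont.mono sphere_subset_closedBall)).circleIntegrable r.2
    calc _ = (2 * Real.pi * Complex.I : ℂ)⁻¹ • ∮ z in C(c, R / 2), (z - w)⁻¹ • f i z := by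
          rw [lp.coeFn_smul, Pi.smul_apply]
          congr 1
          refine (lp.evalCLM ℂ (fun _ : ι => E) ⊤ i).map_circleIntegral hint_w |>.trans
            (circleIntegral.integral_congr r.2 fun z hz => ?_)
          simp only [map_smul]
          exact congrArg _ (hΦ z (hsub (sphere_subset_closedBall hz)) i)
      _ = f i w := ((hf i).mono (ball_subset_ball (by linarith)))
          |>.two_pi_i_inv_smul_circleIntegral_sub_inv_smul hw

end HolomorphicFamily

theorem summable_norm_inv_pow_smul {y : ℕ → X} {B : ℝ} (hy : ∀ k, ‖y k‖ ≤ B) {z : ℂ}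
    (hz : 1 < ‖z‖) : Summable fun k => ‖z⁻¹ ^ k • y k‖ := by
  have hr : ‖z‖⁻¹ < 1 := inv_lt_one_of_one_lt₀ hz
  refine .of_nonneg_of_le (fun _ => norm_nonneg _) (fun k => ?_)
    ((summable_geometric_of_lt_one (by positivity) hr).mul_left B)
  rw [norm_smul, norm_pow, norm_inv, mul_comm]
  exact mul_le_mul_of_nonneg_right (hy k) (by positivity)

theorem norm_tsum_inv_pow_smul_le {y : ℕ → X} {B : ℝ} (hy : ∀ k, ‖y k‖ ≤ B) {z : ℂ}
    (hz : 1 < ‖z‖) : (‖z‖ - 1) * ‖∑' k, z⁻¹ ^ k • y k‖ ≤ ‖z‖ * B := by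
  have hr : ‖z‖⁻¹ < 1 := inv_lt_one_of_one_lt₀ hz
  have hgeom := summable_geometric_of_lt_one (by positivity) hr
  have hle : ‖∑' k, z⁻¹ ^ k • y k‖ ≤ B * (1 - ‖z‖⁻¹)⁻¹ := by
    rw [← tsum_geometric_of_lt_one (by positivity) hr, ← tsum_mul_left]
    refine (norm_tsum_le_tsum_norm (summable_norm_inv_pow_smul hy hz)).trans
      (Summable.tsum_le_tsum (fun k => ?_) (summable_norm_inv_pow_smul hy hz) (hgeom.mul_left B))
    rw [norm_smul, norm_pow, norm_inv, mul_comm]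
    exact mul_le_mul_of_nonneg_right (hy k) (by positivity)
  have hz1 : ‖z‖ - 1 ≠ 0 := (sub_pos.2 hz).ne'
  calc (‖z‖ - 1) * ‖∑' k, z⁻¹ ^ k • y k‖ ≤ (‖z‖ - 1) * (B * (1 - ‖z‖⁻¹)⁻¹) :=
        mul_le_mul_of_nonneg_left hle (by linarith)
    _ = ‖z‖ * B := by field_simp

/-- For `g = x̃` this is `zⁿ (x̃(z) - ∑_{j<n} x(j) z^{-j}) = ∑_k x(n+k) z^{-k}`, the Z-transform
of the `n`-fold shifted sequence; for a holomorphic extension `g` it extends that function. -/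
def zRemainder (x : Linf X) (g : ℂ → X) (n : ℕ) (z : ℂ) : X :=
  z ^ n • g z - ∑ j ∈ Finset.range n, z ^ (n - j) • x j

theorem zRemainder_zero (x : Linf X) (g : ℂ → X) (z : ℂ) : zRemainder x g 0 z = g z := by
  simp [zRemainder]

theorem zRemainder_succ (x : Linf X) (g : ℂ → X) (n : ℕ) (z : ℂ) :
    zRemainder x g (n + 1) z = z • (zRemainder x g n z - x n) := by
  have hpow : ∀ j ∈ Finset.range n, z ^ (n + 1 - j) • x j = z • z ^ (n - j) • x j := by
    intro j hj
    rw [smul_smul, ← pow_succ', Nat.sub_add_comm (Finset.mem_range.1 hj).le]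
  simp only [zRemainder, Finset.sum_range_succ, Finset.sum_congr rfl hpow, ← Finset.smul_sum,
    Nat.add_sub_cancel_left, pow_zero, one_smul, pow_succ', mul_smul, smul_sub]
  abel

theorem differentiableOn_zRemainder (x : Linf X) {g : ℂ → X} {U : Set ℂ}
    (hg : DifferentiableOn ℂ g U) (n : ℕ) : DifferentiableOn ℂ (zRemainder x g n) U :=
  ((differentiableOn_pow n).smul hg).sub
    (DifferentiableOn.fun_sum fun _ _ => (differentiableOn_pow _).smul_const _)

theorem zRemainder_eq_tsum [CompleteSpace X] {x : Linf X} {g : ℂ → X} {z : ℂ} (hz : 1 < ‖z‖)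
    (hgz : g z = ztrans X x z) (n : ℕ) :
    zRemainder x g n z = ∑' k, z⁻¹ ^ k • x (k + n) := by
  induction n with
  | zero => simp [zRemainder_zero, hgz, ztrans]
  | succ n ih =>
    have hsum : Summable fun k => z⁻¹ ^ k • x (k + n) :=
      (summable_norm_inv_pow_smul (fun k => lp.norm_apply_le_norm ENNReal.top_ne_zero x _)
        hz).of_norm
    have hz0 : z ≠ 0 := norm_pos_iff.1 (one_pos.trans hz)
    rw [zRemainder_succ, ih, hsum.tsum_eq_zero_add, pow_zero, one_smul, zero_add,
      add_sub_cancel_left, ← tsum_const_smul'']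
    refine tsum_congr fun k => ?_
    rw [smul_smul, pow_succ', ← mul_assoc, mul_inv_cancel₀ hz0, one_mul, add_assoc, add_comm 1 n]

theorem one_sub_norm_mul_norm_zRemainder_le (x : Linf X) (g : ℂ → X) {z : ℂ} (hz : ‖z‖ < 1)
    (n : ℕ) : (1 - ‖z‖) * ‖zRemainder x g n z‖ ≤ (1 - ‖z‖) * ‖g z‖ + ‖z‖ * ‖x‖ := by
  induction n with
  | zero => simp only [zRemainder_zero]; nlinarith [norm_nonneg z, norm_nonneg x]
  | succ n ih =>
    have hstep : ‖zRemainder x g (n + 1) z‖ ≤ ‖z‖ * (‖zRemainder x g n z‖ + ‖x‖) := by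
      rw [zRemainder_succ, norm_smul]
      exact mul_le_mul_of_nonneg_left ((norm_sub_le _ _).trans (add_le_add_right
        (lp.norm_apply_le_norm ENNReal.top_ne_zero x n) _)) (norm_nonneg z)
    have hz' : 0 ≤ 1 - ‖z‖ := sub_nonneg.2 hz.le
    nlinarith [mul_le_mul_of_nonneg_left hstep hz', mul_le_mul_of_nonneg_left ih (norm_nonneg z),
      mul_nonneg (mul_nonneg hz' hz') (norm_nonneg (g z))]

theorem abs_norm_sub_one_mul_norm_zRemainder_le [CompleteSpace X] (x : Linf X) {g : ℂ → X}
    {z : ℂ} (hgz : 1 < ‖z‖ → g z = ztrans X x z) (n : ℕ) :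
    |‖z‖ - 1| * ‖zRemainder x g n z‖ ≤ ‖g z‖ + ‖z‖ * ‖x‖ := by
  rcases lt_trichotomy ‖z‖ 1 with hz | hz | hz
  · rw [abs_of_neg (sub_neg.2 hz), neg_sub]
    nlinarith [one_sub_norm_mul_norm_zRemainder_le x g hz n,
      mul_nonneg (norm_nonneg z) (norm_nonneg (g z))]
  · simp only [hz, sub_self, abs_zero, zero_mul]
    positivity
  · rw [abs_of_pos (sub_pos.2 hz), zRemainder_eq_tsum hz (hgz hz)]
    exact (norm_tsum_inv_pow_smul_le (fun k => lp.norm_apply_le_norm ENNReal.top_ne_zero x _)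
      hz).trans (le_add_of_nonneg_left (norm_nonneg _))

section CircleFactor

open ComplexConjugate

/-- With `u = z̄₀ (w - z₀)`, on the circle `‖w - z₀‖ = ρ` around a point `z₀` of the unit circle
we have `u ū = ρ²` and `‖w‖² - 1 = u + ū + ρ²`, so `u² + ρ² u + ρ² = (‖w‖² - 1) u` has modulus
`ρ |‖w‖² - 1|` there, while it stays away from `0` on the disc of radius `ρ / 2`. -/
def circleFactor (z₀ : ℂ) (ρ : ℝ) (w : ℂ) : ℂ :=
  (conj z₀ * (w - z₀)) ^ 2 + (ρ : ℂ) ^ 2 * (conj z₀ * (w - z₀)) + (ρ : ℂ) ^ 2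

theorem differentiable_circleFactor (z₀ : ℂ) (ρ : ℝ) : Differentiable ℂ (circleFactor z₀ ρ) := by
  unfold circleFactor
  fun_prop

theorem norm_conj_mul_sub {z₀ : ℂ} (hz₀ : ‖z₀‖ = 1) (w : ℂ) :
    ‖conj z₀ * (w - z₀)‖ = ‖w - z₀‖ := by
  rw [norm_mul, Complex.norm_conj, hz₀, one_mul]

theorem norm_circleFactor_of_norm_sub_eq {z₀ w : ℂ} {ρ : ℝ} (hz₀ : ‖z₀‖ = 1)
    (hw : ‖w - z₀‖ = ρ) : ‖circleFactor z₀ ρ w‖ = ρ * |‖w‖ ^ 2 - 1| := by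
  have h1 : z₀ * conj z₀ = 1 := by
    rw [Complex.mul_conj, Complex.normSq_eq_norm_sq, hz₀]; norm_num
  have h2 : (w - z₀) * (conj w - conj z₀) = (ρ : ℂ) ^ 2 := by
    rw [← map_sub, Complex.mul_conj, Complex.normSq_eq_norm_sq, hw]; push_cast; ring
  have h3 : w * conj w = (‖w‖ : ℂ) ^ 2 := by
    rw [Complex.mul_conj, Complex.normSq_eq_norm_sq]; push_cast; ring
  have hfactor : circleFactor z₀ ρ w = ((‖w‖ ^ 2 - 1 : ℝ) : ℂ) * (conj z₀ * (w - z₀)) := by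
    unfold circleFactor
    push_cast
    linear_combination (-(conj z₀ * (w - z₀)) - 1) * h2 - ((w - z₀) * conj w) * h1 +
      (conj z₀ * (w - z₀)) * h3
  rw [hfactor, norm_mul, norm_conj_mul_sub hz₀, hw, Complex.norm_real, Real.norm_eq_abs, mul_comm]

theorem sq_div_four_le_norm_circleFactor {z₀ w : ℂ} {ρ : ℝ} (hz₀ : ‖z₀‖ = 1) (hρ1 : ρ ≤ 1)
    (hw : ‖w - z₀‖ ≤ ρ / 2) : ρ ^ 2 / 4 ≤ ‖circleFactor z₀ ρ w‖ := by
  set u := conj z₀ * (w - z₀)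
  have hu : ‖u‖ ≤ ρ / 2 := (norm_conj_mul_sub hz₀ w).trans_le hw
  have hu0 : 0 ≤ ‖u‖ := norm_nonneg u
  have hρ2 : ρ ^ 2 ≤ ‖circleFactor z₀ ρ w‖ + ‖u‖ ^ 2 + ρ ^ 2 * ‖u‖ := by
    calc ρ ^ 2 = ‖circleFactor z₀ ρ w - u ^ 2 - (ρ : ℂ) ^ 2 * u‖ := by
          simp only [circleFactor, u]; ring_nf; simp [sq_abs]
      _ ≤ ‖circleFactor z₀ ρ w‖ + ‖u‖ ^ 2 + ρ ^ 2 * ‖u‖ := by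
          refine (norm_sub_le _ _).trans (add_le_add ((norm_sub_le _ _).trans_eq ?_) ?_)
          · rw [norm_pow]
          · rw [norm_mul, norm_pow, Complex.norm_real, Real.norm_eq_abs, sq_abs]
  nlinarith [mul_le_mul_of_nonneg_left hu (sq_nonneg ρ), mul_le_mul hu hu hu0 (hu0.trans hu)]

end CircleFactor

theorem exists_forall_norm_zRemainder_le [CompleteSpace X] {x : Linf X} {g : ℂ → X} {z₀ : ℂ}
    {ρ : ℝ} (hz₀ : ‖z₀‖ = 1) (hρ : 0 < ρ) (hρ1 : ρ ≤ 1)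
    (hg : DifferentiableOn ℂ g (closedBall z₀ ρ))
    (hgz : ∀ z ∈ closedBall z₀ ρ, 1 < ‖z‖ → g z = ztrans X x z) :
    ∃ C, ∀ n, ∀ z ∈ closedBall z₀ (ρ / 2), ‖zRemainder x g n z‖ ≤ C := by
  obtain ⟨K, hK⟩ := (isCompact_closedBall z₀ ρ).exists_bound_of_continuousOn
    (f := fun w => ρ * (‖w‖ + 1) * (‖g w‖ + ‖w‖ * ‖x‖)) (by
      have hgn := hg.continuousOn.norm
      fun_prop)
  have hbdry : ∀ n, ∀ w ∈ sphere z₀ ρ, ‖circleFactor z₀ ρ w • zRemainder x g n w‖ ≤ K := by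
    intro n w hw
    have hwb := sphere_subset_closedBall hw
    have habs : |‖w‖ ^ 2 - 1| = (‖w‖ + 1) * |‖w‖ - 1| := by
      rw [← abs_of_pos (by positivity : 0 < ‖w‖ + 1), ← abs_mul]
      ring_nf
    rw [norm_smul, norm_circleFactor_of_norm_sub_eq hz₀ (mem_sphere_iff_norm.1 hw), habs]
    calc ρ * ((‖w‖ + 1) * |‖w‖ - 1|) * ‖zRemainder x g n w‖
        = ρ * (‖w‖ + 1) * (|‖w‖ - 1| * ‖zRemainder x g n w‖) := by ring
      _ ≤ ρ * (‖w‖ + 1) * (‖g w‖ + ‖w‖ * ‖x‖) := mul_le_mul_of_nonneg_left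
          (abs_norm_sub_one_mul_norm_zRemainder_le x (hgz w hwb) n) (by positivity)
      _ ≤ K := (Real.le_norm_self _).trans (hK w hwb)
  have hmax : ∀ n, ∀ z ∈ closedBall z₀ ρ, ‖circleFactor z₀ ρ z • zRemainder x g n z‖ ≤ K := by
    intro n z hz
    refine Complex.norm_le_of_forall_mem_frontier_norm_le isBounded_ball
      (((differentiable_circleFactor z₀ ρ).differentiableOn.smul
        (differentiableOn_zRemainder x hg n)).diffContOnCl_ball subset_rfl)
      (fun w hw => hbdry n w ?_) ?_
    · rwa [frontier_ball z₀ hρ.ne'] at hw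
    · rwa [closure_ball z₀ hρ.ne']
  refine ⟨4 * K / ρ ^ 2, fun n z hz => ?_⟩
  have hp := sq_div_four_le_norm_circleFactor hz₀ hρ1 (mem_closedBall_iff_norm.1 hz)
  have hpH := hmax n z (closedBall_subset_closedBall (by linarith) hz)
  rw [norm_smul] at hpH
  rw [le_div_iff₀ (by positivity)]
  nlinarith [mul_le_mul_of_nonneg_right hp (norm_nonneg (zRemainder x g n z))]

theorem smul_sub_SbarL_mk_eq {x y : Linf X} {z : ℂ} (hz : z ≠ 0)
    (hy : ∀ n, y (n + 1) = z • (y n - x n)) :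
    z • (z⁻¹ • Submodule.Quotient.mk y) - SbarL X (z⁻¹ • Submodule.Quotient.mk y) =
      (Submodule.Quotient.mk x : YQ X) := by
  have hshift : shiftl X y = z • (y - x) := by
    ext n
    rw [shiftl_apply, hy, lp.coeFn_smul, lp.coeFn_sub, Pi.smul_apply, Pi.sub_apply]
  have hSbar : SbarL X (Submodule.Quotient.mk y) = Submodule.Quotient.mk (shiftl X y) := rfl
  rw [map_smul, hSbar, hshift, smul_smul, mul_inv_cancel₀ hz, one_smul, Submodule.Quotient.mk_smul,
    smul_smul, inv_mul_cancel₀ hz, one_smul, Submodule.Quotient.mk_sub, sub_sub_cancel]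

theorem notMem_specSeq_of_ztrans_extends [CompleteSpace X] {x : Linf X} {z₀ : ℂ} {U : Set ℂ}
    {g : ℂ → X} (hU : IsOpen U) (hz₀U : z₀ ∈ U) (hg : DifferentiableOn ℂ g U)
    (hgz : ∀ z ∈ U, 1 < ‖z‖ → g z = ztrans X x z) : z₀ ∉ specSeq X x := by
  rintro ⟨hz₀, hsing⟩
  obtain ⟨ε, hε, hball⟩ := Metric.isOpen_iff.1 hU z₀ hz₀U
  set ρ := min (ε / 2) 1
  have hρ : 0 < ρ := lt_min (half_pos hε) one_pos
  have hρ1 : ρ ≤ 1 := min_le_right _ _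
  have hρU : closedBall z₀ ρ ⊆ U :=
    (closedBall_subset_ball ((min_le_left _ _).trans_lt (half_lt_self hε))).trans hball
  obtain ⟨C, hC⟩ := exists_forall_norm_zRemainder_le hz₀ hρ hρ1 (hg.mono hρU)
    fun z hz => hgz z (hρU hz)
  obtain ⟨F, hFdiff, hF⟩ := exists_differentiableOn_lp_of_forall_norm_le (half_pos hρ)
    (fun n => (differentiableOn_zRemainder x hg n).diffContOnCl_ball
      ((closedBall_subset_closedBall (by linarith)).trans hρU)) hC
  have hne : ∀ z ∈ ball z₀ (ρ / 2 / 2), z ≠ 0 := by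
    rintro z hz rfl
    rw [mem_ball_iff_norm, zero_sub, norm_neg, hz₀] at hz
    linarith
  refine hsing ⟨ball z₀ (ρ / 2 / 2), fun z => z⁻¹ • Submodule.Quotient.mk (F z), isOpen_ball,
    mem_ball_self (by positivity), ?_, fun z hz _ => smul_sub_SbarL_mk_eq (hne z hz) fun n => ?_⟩
  · exact (differentiableOn_id.inv hne).smul
      ((c0 X).mkQL.differentiable.comp_differentiableOn hFdiff)
  · rw [hF z hz, hF z hz, zRemainder_succ]

end

/-- if the Z-transform of `x` extends holomorphically to a neighborhood of
`z₀ ∈ Γ`, then `z₀ ∉ σ(x)`; consequently `σ(x) ⊆ σ_Z(x)`. -/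
theorem stmt14 [CompleteSpace X] (x : Linf X) :
    (∀ z₀ : ℂ, ‖z₀‖ = 1 →
      (∃ (U : Set ℂ) (g : ℂ → X), IsOpen U ∧ z₀ ∈ U ∧ DifferentiableOn ℂ g U ∧
        ∀ z ∈ U, 1 < ‖z‖ → g z = ztrans X x z) → z₀ ∉ specSeq X x) ∧
    specSeq X x ⊆ sigmaZ X x := by
  have hext : ∀ z₀ : ℂ, (∃ (U : Set ℂ) (g : ℂ → X), IsOpen U ∧ z₀ ∈ U ∧
      DifferentiableOn ℂ g U ∧ ∀ z ∈ U, 1 < ‖z‖ → g z = ztrans X x z) → z₀ ∉ specSeq X x :=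
    fun _ ⟨_, _, hU, hz₀U, hg, hgz⟩ => notMem_specSeq_of_ztrans_extends hU hz₀U hg hgz
  exact ⟨fun z₀ _ => hext z₀, fun z₀ hz₀ => ⟨hz₀.1, fun h => hext z₀ h hz₀⟩⟩
end
end

section
/- The inclusion σ(x) ⊆ σ_Z(x) can be strict: for the real sequence x(0) = 0, x(n) = 1/n for n ≥ 1, one has σ(x) = ∅ (since x ∈ c₀) while 1 ∈ σ_Z(x), because x̃(z) = Σ_{j≥1} z^{-j}/j has no holomorphic extension to any neighborhood of 1. -/
noncomputable section
open Filter Topology Metric Set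

variable (X : Type*) [NormedAddCommGroup X] [NormedSpace ℂ X]

/-- The sequence `x(0) = 0`, `x(n) = 1/n` for `n ≥ 1`, as an element of `l^∞(ℕ₀, ℂ)`. -/
def xex : Linf ℂ :=
  ⟨fun n => if n = 0 then 0 else ((n : ℂ))⁻¹, memℓp_infty ⟨1, by
    rintro - ⟨n, rfl⟩
    match n with
    | 0 => simp
    | (m + 1) =>
      show ‖if m + 1 = 0 then (0 : ℂ) else ((m + 1 : ℕ) : ℂ)⁻¹‖ ≤ 1
      rw [if_neg (Nat.succ_ne_zero m), norm_inv]
      refine inv_le_one_of_one_le₀ ?_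
      rw [show ((m + 1 : ℕ) : ℂ) = ((m + 1 : ℕ) : ℝ) by push_cast; ring]
      rw [Complex.norm_real]
      rw [Real.norm_eq_abs, abs_of_nonneg (by positivity)]
      have h0 : (0 : ℝ) ≤ (m : ℝ) := Nat.cast_nonneg m
      push_cast
      linarith⟩⟩

/-!
Since `x ∈ c₀`, its class in `l^∞/c₀` vanishes, so the zero function solves the resolvent
equation everywhere and `σ(x) = ∅`. On the other hand `x̃(z) = -log (1 - z⁻¹)` for `|z| > 1`,
which blows up as `z → 1⁺` along the reals, whereas a holomorphic extension near `1` would be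
continuous, hence bounded, there.
-/

lemma specSeq_eq_empty_of_mem_c0 {x : Linf X} (hx : x ∈ c0 X) : specSeq X x = ∅ := by
  refine eq_empty_of_forall_notMem fun z₀ hz₀ => hz₀.2 ?_
  refine ⟨univ, 0, isOpen_univ, trivial, differentiableOn_const 0, fun z _ _ => ?_⟩
  rw [Pi.zero_apply, smul_zero, map_zero, sub_zero, eq_comm, Submodule.Quotient.mk_eq_zero]
  exact hx

lemma mem_sigmaZ_of_tendsto_norm_ztrans_atTop {x : Linf X} {z₀ : ℂ} (hz₀ : ‖z₀‖ = 1)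
    {l : Filter ℂ} [l.NeBot] (hl : l ≤ 𝓝 z₀) (hl_out : ∀ᶠ z in l, 1 < ‖z‖)
    (hx : Tendsto (fun z => ‖ztrans X x z‖) l atTop) : z₀ ∈ sigmaZ X x := by
  refine ⟨hz₀, fun ⟨U, g, hU, hz₀U, hg, hgx⟩ => ?_⟩
  have hg_cont : Tendsto (fun z => ‖g z‖) l (𝓝 ‖g z₀‖) :=
    ((hg.continuousOn.continuousAt (hU.mem_nhds hz₀U)).tendsto.mono_left hl).norm
  have hg_eq : (fun z => ‖ztrans X x z‖) =ᶠ[l] fun z => ‖g z‖ := by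
    filter_upwards [hl (hU.mem_nhds hz₀U), hl_out] with z hzU hz
    rw [hgx z hzU hz]
  exact not_tendsto_atTop_of_tendsto_nhds hg_cont (hx.congr' hg_eq)

lemma xex_mem_c0 : xex ∈ c0 ℂ := by
  refine (tendsto_inv_atTop_nhds_zero_nat (𝕜 := ℂ)).congr' ?_
  filter_upwards [eventually_ne_atTop 0] with n hn
  exact (if_neg hn).symm

lemma ztrans_xex {z : ℂ} (hz : 1 < ‖z‖) : ztrans ℂ xex z = -Complex.log (1 - z⁻¹) := by
  have hz' : ‖z⁻¹‖ < 1 := by rw [norm_inv]; exact inv_lt_one_of_one_lt₀ hz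
  refine ((Complex.hasSum_taylorSeries_neg_log hz').congr_fun fun n => ?_).tsum_eq
  rcases eq_or_ne n 0 with rfl | hn
  · simp [xex]
  · simp [xex, hn, div_eq_mul_inv]

lemma tendsto_one_sub_inv_nhdsGT_one :
    Tendsto (fun t : ℝ => 1 - t⁻¹) (𝓝[>] 1) (𝓝[>] 0) := by
  refine tendsto_nhdsWithin_of_tendsto_nhds_of_eventually_within _ ?_ ?_
  · have : ContinuousAt (fun t : ℝ => 1 - t⁻¹) 1 := by fun_prop (disch := norm_num)
    simpa using this.tendsto.mono_left nhdsWithin_le_nhds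
  · filter_upwards [self_mem_nhdsWithin] with t ht
    simpa using inv_lt_one_of_one_lt₀ ht

lemma tendsto_norm_neg_log_one_sub_inv_nhdsGT_one :
    Tendsto (fun t : ℝ => ‖-Complex.log (1 - (t : ℂ)⁻¹)‖) (𝓝[>] 1) atTop := by
  have h_log : Tendsto (fun t : ℝ => |Real.log (1 - t⁻¹)|) (𝓝[>] 1) atTop :=
    tendsto_abs_atBot_atTop.comp <|
      Real.tendsto_log_nhdsGT_zero.comp tendsto_one_sub_inv_nhdsGT_one
  refine h_log.congr' ?_
  filter_upwards [tendsto_one_sub_inv_nhdsGT_one self_mem_nhdsWithin] with t ht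
  rw [norm_neg, ← Complex.ofReal_one, ← Complex.ofReal_inv, ← Complex.ofReal_sub,
    ← Complex.ofReal_log ht.le, Complex.norm_real, Real.norm_eq_abs]

lemma eventually_one_lt_norm_ofReal_nhdsGT_one : ∀ᶠ t : ℝ in 𝓝[>] 1, 1 < ‖(t : ℂ)‖ := by
  filter_upwards [self_mem_nhdsWithin] with t ht
  rwa [Complex.norm_real, Real.norm_of_nonneg (zero_le_one.trans ht.le)]

lemma tendsto_norm_ztrans_xex :
    Tendsto (fun z => ‖ztrans ℂ xex z‖) (map ((↑) : ℝ → ℂ) (𝓝[>] 1)) atTop := by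
  refine tendsto_map'_iff.2 (tendsto_norm_neg_log_one_sub_inv_nhdsGT_one.congr' ?_)
  filter_upwards [eventually_one_lt_norm_ofReal_nhdsGT_one] with t ht
  simp only [Function.comp_apply, ztrans_xex ht]

/-- the inclusion `σ(x) ⊆ σ_Z(x)` can be strict: for `x(0)=0`,
`x(n) = 1/n` (`n ≥ 1`), one has `σ(x) = ∅` while `1 ∈ σ_Z(x)`. -/
theorem stmt15 : specSeq ℂ xex = ∅ ∧ (1 : ℂ) ∈ sigmaZ ℂ xex := by
  refine ⟨specSeq_eq_empty_of_mem_c0 ℂ xex_mem_c0, ?_⟩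
  have hl : Tendsto ((↑) : ℝ → ℂ) (𝓝[>] 1) (𝓝 1) := by
    simpa using (Complex.continuous_ofReal.tendsto 1).mono_left nhdsWithin_le_nhds
  exact mem_sigmaZ_of_tendsto_norm_ztrans_atTop ℂ (by simp) hl
    eventually_one_lt_norm_ofReal_nhdsGT_one tendsto_norm_ztrans_xex
end
end

section
/- Let V be the operator on l^∞(ℕ₀, X) given by (Vx)(n) = A x(n) + (B*x)(n), and let F be a translation-bi-invariant closed subspace of l^∞(ℕ₀, X) that is invariant under V. If x is a bounded solution of x(n+1) = Ax(n) + Σ_{k=0}^n B(n−k)x(k) + y(n), then σ_F(y) ⊆ σ_F(x). In particular, the equation has no solution in c₀(ℕ₀,X) when y ∉ c₀(ℕ₀,X), and (taking F = AAP(ℕ₀,X)) no asymptotically almost periodic solution when y is not asymptotically almost periodic. -/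
noncomputable section
open Filter Topology Metric Set

variable (X : Type*) [NormedAddCommGroup X] [NormedSpace ℂ X]

/-- The Volterra operator `V x = A x + B * x` on `l^∞`. -/
def Vop (A : X →L[ℂ] X) (B : ℕ → X →L[ℂ] X) (hB : Summable fun n => ‖B n‖)
    (x : Linf X) : Linf X :=
  ⟨fun n => A ((x : ∀ _ : ℕ, X) n) +
      ∑ k ∈ Finset.range (n + 1), B k ((x : ∀ _ : ℕ, X) (n - k)),
    memℓp_infty ⟨(‖A‖ + ∑' n : ℕ, ‖B n‖) * ‖x‖, by
      rintro - ⟨n, rfl⟩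
      have hx : ∀ m : ℕ, ‖(x : ∀ _ : ℕ, X) m‖ ≤ ‖x‖ := fun m =>
        lp.norm_apply_le_norm ENNReal.top_ne_zero x m
      calc ‖A ((x : ∀ _ : ℕ, X) n) +
            ∑ k ∈ Finset.range (n + 1), B k ((x : ∀ _ : ℕ, X) (n - k))‖
          ≤ ‖A ((x : ∀ _ : ℕ, X) n)‖ +
            ‖∑ k ∈ Finset.range (n + 1), B k ((x : ∀ _ : ℕ, X) (n - k))‖ :=
            norm_add_le _ _
        _ ≤ ‖A‖ * ‖x‖ +
            ∑ k ∈ Finset.range (n + 1), ‖B k‖ * ‖x‖ := by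
            refine add_le_add ((A.le_opNorm _).trans
              (mul_le_mul_of_nonneg_left (hx n) (norm_nonneg A))) ?_
            refine (norm_sum_le _ _).trans (Finset.sum_le_sum fun k _ => ?_)
            exact ((B k).le_opNorm _).trans
              (mul_le_mul_of_nonneg_left (hx _) (norm_nonneg (B k)))
        _ ≤ ‖A‖ * ‖x‖ + (∑' m : ℕ, ‖B m‖) * ‖x‖ := by
            rw [← Finset.sum_mul]
            have hsum : ∑ m ∈ Finset.range (n + 1), ‖B m‖ ≤ ∑' m : ℕ, ‖B m‖ :=
              hB.sum_le_tsum _ (fun m _ => norm_nonneg (B m))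
            exact add_le_add le_rfl (mul_le_mul_of_nonneg_right hsum (norm_nonneg x))
        _ = (‖A‖ + ∑' m : ℕ, ‖B m‖) * ‖x‖ := by ring⟩⟩

open scoped Classical

/-- The operator induced by the shift on the quotient `l^∞/F`, for a shift-invariant
subspace `F` (defined to be `0` otherwise). -/
def SbarF (F : Submodule ℂ (Linf X)) : (Linf X ⧸ F) →ₗ[ℂ] (Linf X ⧸ F) :=
  if h : F ≤ F.comap (shiftl X) then F.mapQ F (shiftl X) h else 0

/-- The `F`-spectrum of a bounded sequence `x`: the set of points `z₀ ∈ Γ` to which the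
resolvent function `λ ↦ R(λ, S̄) x̄` in `l^∞/F` has no holomorphic extension. -/
def specF (F : Submodule ℂ (Linf X)) [IsClosed (F : Set (Linf X))] (x : Linf X) :
    Set ℂ :=
  {z₀ : ℂ | ‖z₀‖ = 1 ∧
    ¬ ∃ (U : Set ℂ) (h : ℂ → Linf X ⧸ F), IsOpen U ∧ z₀ ∈ U ∧
      DifferentiableOn ℂ h U ∧
      ∀ z ∈ U, ‖z‖ ≠ 1 → z • h z - SbarF X F (h z) = Submodule.Quotient.mk x}

/-- The space `AAP(ℕ₀, X)` of asymptotically almost periodic sequences: the closed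
subspace generated by `c₀` together with the sequences `(λⁿ v)` with `|λ| = 1`. -/
def AAPsub : Submodule ℂ (Linf X) :=
  (Submodule.span ℂ
    ({x : Linf X | Tendsto (fun n => (x : ∀ _ : ℕ, X) n) atTop (nhds 0)} ∪
     {x : Linf X | ∃ (lam : ℂ) (v : X), ‖lam‖ = 1 ∧
        ∀ n : ℕ, (x : ∀ _ : ℕ, X) n = lam ^ n • v})).topologicalClosure

/-!
The equation says `y = S x - V x`. A closed subspace `F` with `S⁻¹(F) = F` contains every
truncation of a sequence (shift it past its support), hence contains `c₀`; since `S V - V S` maps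
into `c₀`, the operator `S - V` descends to a continuous operator on `l^∞/F` commuting with `S̄`.
Composing a local holomorphic solution `h` of `λ h - S̄ h = x̄` with it gives one for
`ȳ = (S̄ - V̄) x̄`, so `σ_F(y) ⊆ σ_F(x)`. For the other two claims, `S` and `V` leave `c₀` and
`AAP` invariant: `V` preserves `c₀` by Tannery's theorem, and `V (λⁿ v)` differs from
`λⁿ (A v + ∑ₖ λ⁻ᵏ B k v)` by a sequence in `c₀`.
-/

section LocalResolvent

variable {Y : Type*} [NormedAddCommGroup Y] [NormedSpace ℂ Y]

def HasLocalResolvent (S : Y →ₗ[ℂ] Y) (a : Y) (z₀ : ℂ) : Prop :=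
  ∃ (U : Set ℂ) (h : ℂ → Y), IsOpen U ∧ z₀ ∈ U ∧ DifferentiableOn ℂ h U ∧
    ∀ z ∈ U, ‖z‖ ≠ 1 → z • h z - S (h z) = a

lemma HasLocalResolvent.map {S : Y →ₗ[ℂ] Y} {a : Y} {z₀ : ℂ} (T : Y →L[ℂ] Y)
    (hST : ∀ q, S (T q) = T (S q)) (ha : HasLocalResolvent S a z₀) :
    HasLocalResolvent S (T a) z₀ := by
  obtain ⟨U, h, hU, hz₀, hh, hres⟩ := ha
  refine ⟨U, T ∘ h, hU, hz₀, T.differentiable.comp_differentiableOn hh, fun z hz hz1 => ?_⟩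
  rw [Function.comp_apply, hST, ← T.map_smul, ← map_sub, hres z hz hz1]

end LocalResolvent

namespace Submodule

variable {R M : Type*} [Ring R] [TopologicalSpace M] [AddCommGroup M] [Module R M]

def mapQL (S : Submodule R M) (f : M →L[R] M) (h : S ≤ S.comap f.toLinearMap) :
    M ⧸ S →L[R] M ⧸ S :=
  S.liftQL (S.mkQL ∘L f) fun m hm => by simpa using h hm

@[simp] lemma mapQL_mk (S : Submodule R M) (f : M →L[R] M) (h : S ≤ S.comap f.toLinearMap)
    (m : M) : S.mapQL f h (Quotient.mk m) = Quotient.mk (f m) :=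
  rfl

end Submodule

section Volterra

open Finset

variable {X : Type*} [NormedAddCommGroup X] [NormedSpace ℂ X]

lemma mem_c0_iff (x : Linf X) : x ∈ c0 X ↔ Tendsto (fun n => (x : ∀ _ : ℕ, X) n) atTop (𝓝 0) :=
  Iff.rfl

lemma Vop_apply (A : X →L[ℂ] X) (B : ℕ → X →L[ℂ] X) (hB : Summable fun n => ‖B n‖)
    (x : Linf X) (n : ℕ) :
    (Vop X A B hB x : ∀ _ : ℕ, X) n =
      A ((x : ∀ _ : ℕ, X) n) + ∑ k ∈ range (n + 1), B k ((x : ∀ _ : ℕ, X) (n - k)) :=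
  rfl

lemma sum_range_succ_reflect {M : Type*} [AddCommMonoid M] (f : ℕ → ℕ → M) (n : ℕ) :
    ∑ k ∈ range (n + 1), f (n - k) k = ∑ k ∈ range (n + 1), f k (n - k) := by
  rw [← Nat.sum_antidiagonal_eq_sum_range_succ f, ← Nat.sum_antidiagonal_swap,
    ← Nat.sum_antidiagonal_eq_sum_range_succ fun i j => f j i]
  rfl

lemma eq_shiftl_sub_Vop_of_solution (A : X →L[ℂ] X) (B : ℕ → X →L[ℂ] X)
    (hB : Summable fun n => ‖B n‖) {x y : Linf X}
    (hsol : ∀ n : ℕ, (x : ∀ _ : ℕ, X) (n + 1) =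
      A ((x : ∀ _ : ℕ, X) n) + ∑ k ∈ range (n + 1), B (n - k) ((x : ∀ _ : ℕ, X) k) +
        (y : ∀ _ : ℕ, X) n) :
    y = shiftl X x - Vop X A B hB x := by
  ext n
  rw [lp.coeFn_sub, Pi.sub_apply, shiftl_apply, Vop_apply, hsol,
    sum_range_succ_reflect (fun i j => B j ((x : ∀ _ : ℕ, X) i))]
  abel

lemma norm_Vop_le (A : X →L[ℂ] X) (B : ℕ → X →L[ℂ] X) (hB : Summable fun n => ‖B n‖)
    (x : Linf X) : ‖Vop X A B hB x‖ ≤ (‖A‖ + ∑' n, ‖B n‖) * ‖x‖ := by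
  have hx (m : ℕ) : ‖(x : ∀ _ : ℕ, X) m‖ ≤ ‖x‖ := lp.norm_apply_le_norm ENNReal.top_ne_zero x m
  refine lp.norm_le_of_forall_le (by positivity) fun n => ?_
  calc ‖(Vop X A B hB x : ∀ _ : ℕ, X) n‖
      ≤ ‖A‖ * ‖x‖ + ∑ k ∈ range (n + 1), ‖B k‖ * ‖x‖ := by
        rw [Vop_apply]
        refine (norm_add_le _ _).trans (add_le_add (A.le_of_opNorm_le le_rfl _ |>.trans ?_) ?_)
        · gcongr; exact hx n
        · refine (norm_sum_le _ _).trans (sum_le_sum fun k _ => ?_)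
          exact (B k).le_of_opNorm_le le_rfl _ |>.trans (by gcongr; exact hx _)
    _ ≤ ‖A‖ * ‖x‖ + (∑' m, ‖B m‖) * ‖x‖ := by
        rw [← sum_mul]
        gcongr
        exact hB.sum_le_tsum _ fun m _ => norm_nonneg _
    _ = (‖A‖ + ∑' m, ‖B m‖) * ‖x‖ := by ring

def VopL (A : X →L[ℂ] X) (B : ℕ → X →L[ℂ] X) (hB : Summable fun n => ‖B n‖) :
    Linf X →L[ℂ] Linf X :=
  LinearMap.mkContinuous
    { toFun := Vop X A B hB
      map_add' := fun u v => by
        ext n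
        simp only [lp.coeFn_add, Pi.add_apply, Vop_apply, map_add, sum_add_distrib]
        abel
      map_smul' := fun c u => by
        ext n
        simp only [lp.coeFn_smul, Pi.smul_apply, Vop_apply, map_smul, smul_sum, smul_add,
          RingHom.id_apply] }
    (‖A‖ + ∑' n, ‖B n‖) (norm_Vop_le A B hB)

@[simp] lemma VopL_apply (A : X →L[ℂ] X) (B : ℕ → X →L[ℂ] X) (hB : Summable fun n => ‖B n‖)
    (x : Linf X) : VopL A B hB x = Vop X A B hB x :=
  rfl

lemma shiftl_Vop_sub_Vop_shiftl_apply (A : X →L[ℂ] X) (B : ℕ → X →L[ℂ] X)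
    (hB : Summable fun n => ‖B n‖) (v : Linf X) (n : ℕ) :
    ((shiftl X (Vop X A B hB v) - Vop X A B hB (shiftl X v) : Linf X) : ∀ _ : ℕ, X) n =
      B (n + 1) ((v : ∀ _ : ℕ, X) 0) := by
  have hsum : ∑ k ∈ range (n + 1), B k ((v : ∀ _ : ℕ, X) (n + 1 - k)) =
      ∑ k ∈ range (n + 1), B k ((shiftl X v : ∀ _ : ℕ, X) (n - k)) :=
    sum_congr rfl fun k hk => by
      rw [shiftl_apply, Nat.sub_add_comm (Nat.lt_succ_iff.1 (mem_range.1 hk))]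
  rw [lp.coeFn_sub, Pi.sub_apply, shiftl_apply, Vop_apply, Vop_apply, sum_range_succ, hsum,
    Nat.sub_self, shiftl_apply]
  abel

lemma shiftl_Vop_sub_Vop_shiftl_mem_c0 (A : X →L[ℂ] X) (B : ℕ → X →L[ℂ] X)
    (hB : Summable fun n => ‖B n‖) (v : Linf X) :
    shiftl X (Vop X A B hB v) - Vop X A B hB (shiftl X v) ∈ c0 X := by
  rw [mem_c0_iff, funext (shiftl_Vop_sub_Vop_shiftl_apply A B hB v)]
  refine squeeze_zero_norm (fun n => (B (n + 1)).le_opNorm _) ?_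
  simpa using ((hB.tendsto_atTop_zero).comp (tendsto_add_atTop_nat 1)).mul_const
    ‖(v : ∀ _ : ℕ, X) 0‖

variable [CompleteSpace X]

lemma Vop_mem_c0 (A : X →L[ℂ] X) (B : ℕ → X →L[ℂ] X) (hB : Summable fun n => ‖B n‖)
    {x : Linf X} (hx : x ∈ c0 X) : Vop X A B hB x ∈ c0 X := by
  set u : ℕ → X := fun n => (x : ∀ _ : ℕ, X) n
  -- Tannery's theorem for the series `∑ₖ 1_{k ≤ n} B k (u (n - k))`, dominated by `‖B k‖ ‖x‖`
  have hconv : Tendsto (fun n => ∑ k ∈ range (n + 1), B k (u (n - k))) atTop (𝓝 0) := by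
    have key := tendsto_tsum_of_dominated_convergence (𝓕 := atTop)
      (f := fun n k => if k ≤ n then B k (u (n - k)) else 0) (g := fun _ => 0)
      (hB.mul_right ‖x‖) (fun k => ?_) (Eventually.of_forall fun n k => ?_)
    · rw [tsum_zero] at key
      refine key.congr fun n => ?_
      rw [tsum_eq_sum (s := range (n + 1)) fun k hk => if_neg (by simpa using hk)]
      exact sum_congr rfl fun k hk => if_pos (Nat.lt_succ_iff.1 (mem_range.1 hk))
    · have hk : Tendsto (fun n => B k (u (n - k))) atTop (𝓝 0) := by
        simpa [Function.comp_def] using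
          ((B k).continuous.tendsto 0).comp (hx.comp (tendsto_sub_atTop_nat k))
      exact hk.congr' ((eventually_ge_atTop k).mono fun n hn => (if_pos hn).symm)
    · split_ifs
      · exact (B k).le_of_opNorm_le le_rfl _ |>.trans (by
          gcongr; exact lp.norm_apply_le_norm ENNReal.top_ne_zero x _)
      · simp only [norm_zero]; positivity
  rw [mem_c0_iff, funext (Vop_apply A B hB x)]
  simpa [Function.comp_def] using ((A.continuous.tendsto 0).comp hx).add hconv

end Volterra

section Truncation

variable {X : Type*} [NormedAddCommGroup X] [NormedSpace ℂ X]

def truncation (N : ℕ) (x : Linf X) : Linf X :=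
  ⟨fun n => if n < N then (x : ∀ _ : ℕ, X) n else 0,
    (lp.memℓp x).mono' fun n => by split_ifs <;> simp⟩

lemma truncation_mem {F : Submodule ℂ (Linf X)} (hF : ∀ z, shiftl X z ∈ F → z ∈ F) (N : ℕ)
    (x : Linf X) : truncation N x ∈ F := by
  induction N generalizing x with
  | zero =>
    convert F.zero_mem
    ext n
    simp [truncation]
  | succ N ih =>
    refine hF _ ?_
    convert ih (shiftl X x) using 1
    ext n
    simp [truncation]

lemma tendsto_truncation {x : Linf X} (hx : x ∈ c0 X) :
    Tendsto (fun N => truncation N x) atTop (𝓝 x) := by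
  rw [Metric.tendsto_atTop]
  intro ε hε
  obtain ⟨N, hN⟩ := Metric.tendsto_atTop.1 hx (ε / 2) (half_pos hε)
  refine ⟨N, fun M hM => ?_⟩
  rw [dist_eq_norm]
  refine (lp.norm_le_of_forall_le (half_pos hε).le fun n => ?_).trans_lt (half_lt_self hε)
  rw [lp.coeFn_sub, Pi.sub_apply]
  by_cases hn : n < M
  · simpa [truncation, hn] using (half_pos hε).le
  · simpa [truncation, hn, dist_eq_norm] using (hN n (by omega)).le

lemma c0_le_of_shiftl_mem {F : Submodule ℂ (Linf X)} [IsClosed (F : Set (Linf X))]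
    (hF : ∀ z, shiftl X z ∈ F → z ∈ F) : c0 X ≤ F := fun _ hx =>
  IsClosed.mem_of_tendsto ‹_› (tendsto_truncation hx)
    (Eventually.of_forall fun N => truncation_mem hF N _)

end Truncation

section AAP

open Finset

variable {X : Type*} [NormedAddCommGroup X] [NormedSpace ℂ X]

def geomSeq {lam : ℂ} (hlam : ‖lam‖ = 1) (v : X) : Linf X :=
  ⟨fun n => lam ^ n • v, memℓp_infty ⟨‖v‖, by rintro - ⟨n, rfl⟩; simp [norm_smul, hlam]⟩⟩

@[simp] lemma geomSeq_apply {lam : ℂ} (hlam : ‖lam‖ = 1) (v : X) (n : ℕ) :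
    (geomSeq hlam v : ∀ _ : ℕ, X) n = lam ^ n • v :=
  rfl

lemma mem_AAPsub_of_mem_c0 {x : Linf X} (hx : x ∈ c0 X) : x ∈ AAPsub X :=
  Submodule.le_topologicalClosure _ (Submodule.subset_span (Or.inl hx))

lemma geomSeq_mem_AAPsub {lam : ℂ} (hlam : ‖lam‖ = 1) (v : X) : geomSeq hlam v ∈ AAPsub X :=
  Submodule.le_topologicalClosure _ (Submodule.subset_span (Or.inr ⟨lam, v, hlam, fun _ => rfl⟩))

lemma AAPsub_le_comap (T : Linf X →L[ℂ] Linf X) (hc0 : ∀ x ∈ c0 X, T x ∈ AAPsub X)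
    (hgeom : ∀ (lam : ℂ) (hlam : ‖lam‖ = 1) (v : X), T (geomSeq hlam v) ∈ AAPsub X) :
    AAPsub X ≤ (AAPsub X).comap T.toLinearMap := by
  refine Submodule.topologicalClosure_minimal _ (Submodule.span_le.2 ?_)
    ((Submodule.isClosed_topologicalClosure _).preimage T.continuous)
  rintro g (hg | ⟨lam, v, hlam, hg⟩)
  · exact hc0 g hg
  · obtain rfl : g = geomSeq hlam v := lp.ext (funext hg)
    exact hgeom lam hlam v

lemma shiftL_mem_AAPsub {x : Linf X} (hx : x ∈ AAPsub X) : shiftL X x ∈ AAPsub X := by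
  refine AAPsub_le_comap (shiftL X) (fun g hg => mem_AAPsub_of_mem_c0 (c0_shift_invariant X hg))
    (fun lam hlam v => ?_) hx
  convert geomSeq_mem_AAPsub hlam (lam • v) using 1
  ext n
  simp [shiftL, pow_succ, mul_smul]

variable [CompleteSpace X]

lemma Vop_geomSeq_sub_mem_c0 (A : X →L[ℂ] X) (B : ℕ → X →L[ℂ] X)
    (hB : Summable fun n => ‖B n‖) {lam : ℂ} (hlam : ‖lam‖ = 1) (v : X) :
    Vop X A B hB (geomSeq hlam v) - geomSeq hlam (A v + ∑' k, lam⁻¹ ^ k • B k v) ∈ c0 X := by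
  have hlam0 : lam ≠ 0 := by rintro rfl; simp at hlam
  have hsum : Summable fun k => lam⁻¹ ^ k • B k v :=
    (hB.mul_right ‖v‖).of_norm_bounded fun k => by
      simpa [norm_smul, hlam] using (B k).le_opNorm v
  have hcoord (n : ℕ) :
      ((Vop X A B hB (geomSeq hlam v) - geomSeq hlam (A v + ∑' k, lam⁻¹ ^ k • B k v) : Linf X) :
        ∀ _ : ℕ, X) n =
      lam ^ n • (∑ k ∈ range (n + 1), lam⁻¹ ^ k • B k v - ∑' k, lam⁻¹ ^ k • B k v) := by
    have hconv : ∑ k ∈ range (n + 1), lam ^ (n - k) • B k v =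
        lam ^ n • ∑ k ∈ range (n + 1), lam⁻¹ ^ k • B k v := by
      rw [smul_sum]
      refine sum_congr rfl fun k hk => ?_
      rw [smul_smul, pow_sub₀ lam hlam0 (Nat.lt_succ_iff.1 (mem_range.1 hk)), inv_pow]
    rw [lp.coeFn_sub, Pi.sub_apply, Vop_apply]
    simp only [geomSeq_apply, map_smul]
    rw [hconv, smul_sub, smul_add]
    abel
  rw [mem_c0_iff, funext hcoord, tendsto_zero_iff_norm_tendsto_zero]
  simpa [norm_smul, hlam] using
    ((hsum.hasSum.tendsto_sum_nat.comp (tendsto_add_atTop_nat 1)).sub_const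
      (∑' k, lam⁻¹ ^ k • B k v)).norm

lemma Vop_mem_AAPsub (A : X →L[ℂ] X) (B : ℕ → X →L[ℂ] X) (hB : Summable fun n => ‖B n‖)
    {x : Linf X} (hx : x ∈ AAPsub X) : Vop X A B hB x ∈ AAPsub X := by
  refine AAPsub_le_comap (VopL A B hB) (fun g hg => mem_AAPsub_of_mem_c0 (Vop_mem_c0 A B hB hg))
    (fun lam hlam v => ?_) hx
  rw [VopL_apply, ← add_sub_cancel (geomSeq hlam (A v + ∑' k, lam⁻¹ ^ k • B k v))
    (Vop X A B hB (geomSeq hlam v))]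
  exact add_mem (geomSeq_mem_AAPsub hlam _)
    (mem_AAPsub_of_mem_c0 (Vop_geomSeq_sub_mem_c0 A B hB hlam v))

end AAP

section Spectrum

variable {X : Type*} [NormedAddCommGroup X] [NormedSpace ℂ X]

lemma SbarF_mk {F : Submodule ℂ (Linf X)} (hF : F ≤ F.comap (shiftl X)) (m : Linf X) :
    SbarF X F (Submodule.Quotient.mk m) = Submodule.Quotient.mk (shiftl X m) := by
  rw [SbarF, dif_pos hF]
  rfl

lemma SbarF_mapQL_comm {F : Submodule ℂ (Linf X)} (hF : F ≤ F.comap (shiftl X))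
    (T : Linf X →L[ℂ] Linf X) (hT : F ≤ F.comap T.toLinearMap)
    (hcomm : ∀ m, shiftl X (T m) - T (shiftl X m) ∈ F) (q : Linf X ⧸ F) :
    SbarF X F (F.mapQL T hT q) = F.mapQL T hT (SbarF X F q) := by
  induction q using Submodule.Quotient.induction_on with
  | H m =>
    rw [Submodule.mapQL_mk, SbarF_mk hF, SbarF_mk hF, Submodule.mapQL_mk, Submodule.Quotient.eq]
    exact hcomm m

lemma specF_subset_of_mk_eq_map (F : Submodule ℂ (Linf X)) [IsClosed (F : Set (Linf X))]
    (T : (Linf X ⧸ F) →L[ℂ] Linf X ⧸ F) (hT : ∀ q, SbarF X F (T q) = T (SbarF X F q))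
    {x y : Linf X} (hxy : Submodule.Quotient.mk y = T (Submodule.Quotient.mk x)) :
    specF X F y ⊆ specF X F x := fun _ ⟨hz₀, hy⟩ =>
  ⟨hz₀, fun hx => hy (hxy ▸ HasLocalResolvent.map T hT hx)⟩

lemma specF_subset_of_eq_shiftl_sub_Vop (A : X →L[ℂ] X) (B : ℕ → X →L[ℂ] X)
    (hB : Summable fun n => ‖B n‖) (F : Submodule ℂ (Linf X)) [IsClosed (F : Set (Linf X))]
    (hbi : ⇑(shiftL X) ⁻¹' (F : Set (Linf X)) = (F : Set (Linf X)))
    (hV : ∀ v ∈ F, Vop X A B hB v ∈ F) {x y : Linf X} (hy : y = shiftl X x - Vop X A B hB x) :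
    specF X F y ⊆ specF X F x := by
  have hshift : F ≤ F.comap (shiftl X) := fun _ hz => hbi.ge hz
  have hc0 : c0 X ≤ F := c0_le_of_shiftl_mem fun _ hz => hbi.le hz
  have hT : F ≤ F.comap (shiftL X - VopL A B hB).toLinearMap := fun z hz =>
    F.sub_mem (hbi.ge hz) (hV z hz)
  refine specF_subset_of_mk_eq_map F _ (SbarF_mapQL_comm hshift _ hT fun m => ?_)
    (by rw [hy]; rfl)
  have hcomm := F.neg_mem (hc0 (shiftl_Vop_sub_Vop_shiftl_mem_c0 A B hB m))
  convert hcomm using 1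
  simp only [sub_apply, VopL_apply, map_sub]
  change shiftl X (shiftl X m) - _ - (shiftl X (shiftl X m) - _) = _
  abel

end Spectrum

/-- for a translation-bi-invariant closed subspace `F` invariant under
`V`, any bounded solution `x` of `x(n+1) = A x(n) + (B*x)(n) + y(n)` satisfies
`σ_F(y) ⊆ σ_F(x)`. In particular there is no solution in `c₀` when `y ∉ c₀`, and no
asymptotically almost periodic solution when `y ∉ AAP(ℕ₀, X)`. -/
theorem stmt19 [CompleteSpace X] (A : X →L[ℂ] X) (B : ℕ → X →L[ℂ] X)
    (hB : Summable fun n => ‖B n‖) (F : Submodule ℂ (Linf X))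
    [IsClosed (F : Set (Linf X))]
    (hbi : ⇑(shiftL X) ⁻¹' (F : Set (Linf X)) = (F : Set (Linf X)))
    (hV : ∀ v ∈ F, Vop X A B hB v ∈ F) (x y : Linf X)
    (hsol : ∀ n : ℕ, (x : ∀ _ : ℕ, X) (n + 1) =
      A ((x : ∀ _ : ℕ, X) n) +
        ∑ k ∈ Finset.range (n + 1), B (n - k) ((x : ∀ _ : ℕ, X) k) +
        (y : ∀ _ : ℕ, X) n) :
    specF X F y ⊆ specF X F x ∧
    (¬ Tendsto (fun n => (y : ∀ _ : ℕ, X) n) atTop (nhds 0) →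
      ¬ Tendsto (fun n => (x : ∀ _ : ℕ, X) n) atTop (nhds 0)) ∧
    (y ∉ AAPsub X → x ∉ AAPsub X) := by
  have hy := eq_shiftl_sub_Vop_of_solution A B hB hsol
  refine ⟨specF_subset_of_eq_shiftl_sub_Vop A B hB F hbi hV hy, fun hy0 hx0 => hy0 ?_,
    fun hyA hxA => hyA ?_⟩
  · change y ∈ c0 X
    rw [hy]
    exact sub_mem (c0_shift_invariant X hx0) (Vop_mem_c0 A B hB hx0)
  · rw [hy]
    exact sub_mem (shiftL_mem_AAPsub hxA) (Vop_mem_AAPsub A B hB hxA)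
end
end
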